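/- Let n ≥ 0 and let Φ_n* be the subgroup of R_n(G) generated by x* = (x, t_x) and y* = (y, t_y), where G is the multiplicative group (ℤ_n)² with generators x, y. Then the commutator subgroup of Φ_n* is exactly {(1, (1−y)p·t_x − (1−x)p·t_y) : p ∈ ℤ_n[G]}, where 1−x and 1−y are computed in the group ring ℤ_n[G]. -/

import Mathlib

/-- The group `R_n(G)` of pairs `(g,t)` with `g ∈ G` and `t` in the free left
`ℤ_n[G]`-module with basis indexed by `ι`, with multiplication
`(g,t)(h,s) = (gh, g·s+t)` (the semidirect product `T_n ⋊ G`).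
Here `ℤ_n = ZMod n`, so `ℤ_0 = ℤ`. -/
@[ext]
structure MagnusGroup (n : ℕ) (G : Type*) [Group G] (ι : Type*) where
  fst : G
  snd : ι → MonoidAlgebra (ZMod n) G

namespace MagnusGroup

variable {n : ℕ} {G : Type*} [Group G] {ι : Type*}

noncomputable instance : Mul (MagnusGroup n G ι) :=
  ⟨fun a b => ⟨a.fst * b.fst, fun i => MonoidAlgebra.of (ZMod n) G a.fst * b.snd i + a.snd i⟩⟩

noncomputable instance : One (MagnusGroup n G ι) := ⟨⟨1, 0⟩⟩

noncomputable instance : Inv (MagnusGroup n G ι) :=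
  ⟨fun a => ⟨a.fst⁻¹, fun i => -(MonoidAlgebra.of (ZMod n) G a.fst⁻¹ * a.snd i)⟩⟩

@[simp] lemma mul_fst (a b : MagnusGroup n G ι) : (a * b).fst = a.fst * b.fst := rfl
@[simp] lemma mul_snd (a b : MagnusGroup n G ι) (i : ι) :
    (a * b).snd i = MonoidAlgebra.of (ZMod n) G a.fst * b.snd i + a.snd i := rfl
@[simp] lemma one_fst : (1 : MagnusGroup n G ι).fst = 1 := rfl
@[simp] lemma one_snd (i : ι) : (1 : MagnusGroup n G ι).snd i = 0 := rfl
@[simp] lemma inv_fst (a : MagnusGroup n G ι) : (a⁻¹).fst = a.fst⁻¹ := rfl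
@[simp] lemma inv_snd (a : MagnusGroup n G ι) (i : ι) :
    (a⁻¹).snd i = -(MonoidAlgebra.of (ZMod n) G a.fst⁻¹ * a.snd i) := rfl

noncomputable instance : Group (MagnusGroup n G ι) where
  mul_assoc a b c :=
    MagnusGroup.ext (mul_assoc _ _ _)
      (funext fun i => by simp only [mul_fst, mul_snd, map_mul, mul_add, mul_assoc, add_assoc])
  one_mul a :=
    MagnusGroup.ext (one_mul _)
      (funext fun i => by simp only [mul_fst, mul_snd, one_fst, one_snd, map_one, one_mul,
        add_zero, zero_add])
  mul_one a :=
    MagnusGroup.ext (mul_one _)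
      (funext fun i => by simp only [mul_fst, mul_snd, one_fst, one_snd, mul_zero, zero_add])
  inv_mul_cancel a :=
    MagnusGroup.ext (inv_mul_cancel _)
      (funext fun i => by simp only [mul_fst, mul_snd, inv_fst, inv_snd, one_snd,
        add_neg_cancel, neg_add_cancel])

end MagnusGroup

/-- The subgroup `Φ_n* ≤ R_n(G)` generated by `x* = (x, t_x)` and `y* = (y, t_y)`, where
`G = (ℤ_n)²` with generators `x, y` (written multiplicatively). -/
noncomputable def PhiStar (n : ℕ) : Subgroup (MagnusGroup n (Multiplicative (ZMod n × ZMod n)) (Fin 2)) :=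
  Subgroup.closure
    {⟨Multiplicative.ofAdd ((1 : ZMod n), (0 : ZMod n)), Pi.single 0 1⟩,
     ⟨Multiplicative.ofAdd ((0 : ZMod n), (1 : ZMod n)), Pi.single 1 1⟩}

/-!
Every element `(g, t)` of `Φ_n*` satisfies Fox's fundamental formula
`(x - 1) t_x + (y - 1) t_y = g - 1`, since the generators do and the formula is multiplicative.
As `G` is abelian, the commutator of `(a, t)` and `(b, s)` is `(1, (a - 1) s - (b - 1) t)`;
substituting the formula for `a - 1` and `b - 1` turns it into `q • (1 - y, x - 1)` with
`q = t_x s_y - t_y s_x`, a multiple of the Koszul syzygy of `x - 1, y - 1`. Conversely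
`[x*, y*]` is the syzygy itself, conjugating by an element over `g` multiplies it by `g`, and
`Φ_n*` maps onto `G`, so every `ℤ_n[G]`-multiple of the syzygy is a product of commutators.
-/

open scoped commutatorElement

namespace MagnusGroup

variable {n : ℕ} {G : Type*} {ι : Type*}

local notation "of" => MonoidAlgebra.of (ZMod n) G

section Group

variable [Group G]

def fstHom : MagnusGroup n G ι →* G where
  toFun := fst
  map_one' := rfl
  map_mul' _ _ := rfl

noncomputable def translation :
    Multiplicative (ι → MonoidAlgebra (ZMod n) G) →* MagnusGroup n G ι where
  toFun t := ⟨1, t.toAdd⟩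
  map_one' := rfl
  map_mul' s t := MagnusGroup.ext (one_mul 1).symm <| funext fun i => by
    simp only [toAdd_mul, Pi.add_apply, mul_snd, map_one, one_mul, add_comm]

@[simp] lemma translation_fst (t : Multiplicative (ι → MonoidAlgebra (ZMod n) G)) :
    (translation t).fst = 1 := rfl

@[simp] lemma translation_snd (t : Multiplicative (ι → MonoidAlgebra (ZMod n) G)) :
    (translation t).snd = t.toAdd := rfl

lemma conj_translation (c : MagnusGroup n G ι)
    (t : Multiplicative (ι → MonoidAlgebra (ZMod n) G)) :
    c * translation t * c⁻¹ = translation (.ofAdd (of c.fst • t.toAdd)) := by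
  have hc : of c.fst * of c.fst⁻¹ = 1 := by rw [← map_mul, mul_inv_cancel, map_one]
  refine MagnusGroup.ext (by simp) (funext fun i => ?_)
  simp only [mul_snd, mul_fst, inv_snd, translation_snd, translation_fst, mul_one,
    toAdd_ofAdd, Pi.smul_apply, smul_eq_mul, mul_neg, ← mul_assoc, hc, one_mul]
  abel

end Group

section CommGroup

variable [CommGroup G]

lemma commutatorElement_eq_translation (a b : MagnusGroup n G ι) :
    ⁅a, b⁆ = translation (.ofAdd ((of a.fst - 1) • b.snd - (of b.fst - 1) • a.snd)) := by
  rw [commutatorElement_def, mul_inv_eq_iff_eq_mul, mul_inv_eq_iff_eq_mul]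
  refine MagnusGroup.ext (by simp only [mul_fst, translation_fst, one_mul]; exact mul_comm _ _)
    (funext fun i => ?_)
  simp only [mul_snd, mul_fst, translation_snd, translation_fst, map_one, one_mul,
    toAdd_ofAdd, Pi.sub_apply, Pi.smul_apply, smul_eq_mul]
  ring

variable [Fintype ι]

/-- Fox's fundamental formula, with `a.snd i` in the role of the Fox derivative `∂a/∂xᵢ`. -/
noncomputable def foxSubgroup (x : ι → G) : Subgroup (MagnusGroup n G ι) where
  carrier := {a | ∑ i, (of (x i) - 1) * a.snd i = of a.fst - 1}
  one_mem' := by simp only [Set.mem_ofPred_eq, one_snd, one_fst, map_one, mul_zero,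
    Finset.sum_const_zero, sub_self]
  mul_mem' {a b} ha hb := by
    simp only [Set.mem_ofPred_eq, mul_snd, mul_fst, map_mul, mul_add, Finset.sum_add_distrib,
      mul_left_comm _ (of a.fst), ← Finset.mul_sum] at *
    rw [ha, hb]
    ring
  inv_mem' {a} ha := by
    have ha' : of a.fst⁻¹ * of a.fst = 1 := by rw [← map_mul, inv_mul_cancel, map_one]
    simp only [Set.mem_ofPred_eq, inv_snd, inv_fst, mul_neg, Finset.sum_neg_distrib,
      mul_left_comm _ (of a.fst⁻¹), ← Finset.mul_sum] at *
    rw [ha]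
    linear_combination -ha'

lemma mem_foxSubgroup {x : ι → G} {a : MagnusGroup n G ι} :
    a ∈ foxSubgroup x ↔ ∑ i, (of (x i) - 1) * a.snd i = of a.fst - 1 := Iff.rfl

lemma mk_single_one_mem_foxSubgroup [DecidableEq ι] (x : ι → G) (i : ι) :
    (⟨x i, Pi.single i 1⟩ : MagnusGroup n G ι) ∈ foxSubgroup x := by
  simp [mem_foxSubgroup, Pi.single_apply]

/-- The Koszul relation `(x₀ - 1)(1 - x₁) + (x₁ - 1)(x₀ - 1) = 0`. -/
noncomputable def koszulSyzygy (x : Fin 2 → G) : Fin 2 → MonoidAlgebra (ZMod n) G :=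
  ![1 - of (x 1), of (x 0) - 1]

lemma commutatorElement_eq_translation_koszulSyzygy {x : Fin 2 → G}
    {a b : MagnusGroup n G (Fin 2)} (ha : a ∈ foxSubgroup x) (hb : b ∈ foxSubgroup x) :
    ⁅a, b⁆ =
      translation (.ofAdd ((a.snd 0 * b.snd 1 - a.snd 1 * b.snd 0) • koszulSyzygy x)) := by
  rw [mem_foxSubgroup, Fin.sum_univ_two] at ha hb
  rw [commutatorElement_eq_translation, ← ha, ← hb]
  congr 2
  funext i
  fin_cases i <;> simp [koszulSyzygy] <;> ring

noncomputable def koszulSubgroup (x : Fin 2 → G) : Subgroup (MagnusGroup n G (Fin 2)) where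
  carrier := {z | ∃ p : MonoidAlgebra (ZMod n) G, z = translation (.ofAdd (p • koszulSyzygy x))}
  one_mem' := ⟨0, by rw [zero_smul, ofAdd_zero, map_one]⟩
  mul_mem' := by
    rintro _ _ ⟨p, rfl⟩ ⟨q, rfl⟩
    exact ⟨p + q, by rw [add_smul, ofAdd_add, map_mul]⟩
  inv_mem' := by
    rintro _ ⟨p, rfl⟩
    exact ⟨-p, by rw [neg_smul, ofAdd_neg, map_inv]⟩

lemma mem_koszulSubgroup {x : Fin 2 → G} {z : MagnusGroup n G (Fin 2)} :
    z ∈ koszulSubgroup x ↔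
      ∃ p : MonoidAlgebra (ZMod n) G, z = translation (.ofAdd (p • koszulSyzygy x)) := Iff.rfl

lemma commutator_le_koszulSubgroup {x : Fin 2 → G} {H : Subgroup (MagnusGroup n G (Fin 2))}
    (hH : H ≤ foxSubgroup x) : ⁅H, H⁆ ≤ koszulSubgroup x :=
  Subgroup.commutator_le.2 fun _ ha _ hb =>
    ⟨_, commutatorElement_eq_translation_koszulSyzygy (hH ha) (hH hb)⟩

end CommGroup

end MagnusGroup

namespace PhiStar

open MagnusGroup

variable (n : ℕ)

abbrev G := Multiplicative (ZMod n × ZMod n)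

def gen : Fin 2 → G n := ![.ofAdd (1, 0), .ofAdd (0, 1)]

noncomputable def genStar (i : Fin 2) : MagnusGroup n (G n) (Fin 2) := ⟨gen n i, Pi.single i 1⟩

lemma genStar_mem (i : Fin 2) : genStar n i ∈ PhiStar n := by
  fin_cases i
  · exact Subgroup.subset_closure (Set.mem_insert _ _)
  · exact Subgroup.subset_closure (Set.mem_insert_of_mem _ (Set.mem_singleton _))

lemma le_foxSubgroup : PhiStar n ≤ foxSubgroup (gen n) := by
  rw [PhiStar, Subgroup.closure_le]
  rintro a (rfl | rfl)
  · exact mk_single_one_mem_foxSubgroup (gen n) 0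
  · exact mk_single_one_mem_foxSubgroup (gen n) 1

lemma closure_gen_pair : Subgroup.closure {gen n 0, gen n 1} = ⊤ := by
  refine (Subgroup.eq_top_iff' _).2 fun g => ?_
  obtain ⟨m₁, hm₁⟩ := ZMod.intCast_surjective g.toAdd.1
  obtain ⟨m₂, hm₂⟩ := ZMod.intCast_surjective g.toAdd.2
  have hg : g = gen n 0 ^ m₁ * gen n 1 ^ m₂ := by
    apply Multiplicative.toAdd.injective
    simp only [gen, toAdd_mul, toAdd_zpow, Matrix.cons_val_zero, Matrix.cons_val_one,
      toAdd_ofAdd, Prod.smul_mk, smul_zero, zsmul_eq_mul, mul_one, Prod.mk_add_mk, add_zero,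
      zero_add, hm₁, hm₂]
  rw [hg]
  exact mul_mem (zpow_mem (Subgroup.subset_closure (Set.mem_insert _ _)) _)
    (zpow_mem (Subgroup.subset_closure (Set.mem_insert_of_mem _ (Set.mem_singleton _))) _)

lemma exists_mem_fst_eq (g : G n) : ∃ c ∈ PhiStar n, c.fst = g := by
  have hmap : (PhiStar n).map fstHom = ⊤ := by
    rw [PhiStar, MonoidHom.map_closure, Set.image_pair]
    exact closure_gen_pair n
  obtain ⟨c, hc, rfl⟩ := hmap ▸ Subgroup.mem_top g
  exact ⟨c, hc, rfl⟩

lemma commutatorElement_genStar :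
    ⁅genStar n 0, genStar n 1⁆ = translation (.ofAdd (koszulSyzygy (gen n))) := by
  rw [commutatorElement_eq_translation_koszulSyzygy (le_foxSubgroup n (genStar_mem n 0))
    (le_foxSubgroup n (genStar_mem n 1))]
  simp [genStar]

lemma koszulSubgroup_le_commutator : koszulSubgroup (gen n) ≤ ⁅PhiStar n, PhiStar n⁆ := by
  rintro _ ⟨p, rfl⟩
  induction p using MonoidAlgebra.induction_on with
  | of g =>
    obtain ⟨c, hc, rfl⟩ := exists_mem_fst_eq n g
    have hconj : translation
        (.ofAdd (MonoidAlgebra.of (ZMod n) (G n) c.fst • koszulSyzygy (gen n))) =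
          ⁅c * genStar n 0 * c⁻¹, c * genStar n 1 * c⁻¹⁆ := by
      rw [← MulAut.conj_apply, ← MulAut.conj_apply, ← map_commutatorElement,
        commutatorElement_genStar, MulAut.conj_apply, conj_translation, toAdd_ofAdd]
    rw [hconj]
    exact Subgroup.commutator_mem_commutator
      (mul_mem (mul_mem hc (genStar_mem n 0)) (inv_mem hc))
      (mul_mem (mul_mem hc (genStar_mem n 1)) (inv_mem hc))
  | add p q hp hq =>
    rw [add_smul, ofAdd_add, map_mul]
    exact mul_mem hp hq
  | smul r p hp =>
    obtain ⟨m, rfl⟩ := ZMod.intCast_surjective r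
    rw [smul_assoc, Int.cast_smul_eq_zsmul, ofAdd_zsmul, map_zpow]
    exact zpow_mem hp m

lemma commutator_eq_koszulSubgroup : ⁅PhiStar n, PhiStar n⁆ = koszulSubgroup (gen n) :=
  le_antisymm (commutator_le_koszulSubgroup (le_foxSubgroup n)) (koszulSubgroup_le_commutator n)

lemma translation_smul_koszulSyzygy_gen (p : MonoidAlgebra (ZMod n) (G n)) :
    translation (.ofAdd (p • koszulSyzygy (gen n))) =
      ⟨1, ![(1 - MonoidAlgebra.of (ZMod n) (G n) (gen n 1)) * p,
        -((1 - MonoidAlgebra.of (ZMod n) (G n) (gen n 0)) * p)]⟩ := by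
  refine MagnusGroup.ext rfl (funext fun i => ?_)
  fin_cases i <;> simp [koszulSyzygy] <;> ring

end PhiStar

/-- The commutator subgroup of `Φ_n*` consists exactly of the elements
`(1, (1−y)p·t_x − (1−x)p·t_y)` with `p ∈ ℤ_n[G]`. -/
theorem commutator_PhiStar (n : ℕ)
    (z : MagnusGroup n (Multiplicative (ZMod n × ZMod n)) (Fin 2)) :
    z ∈ ⁅PhiStar n, PhiStar n⁆ ↔
      ∃ p : MonoidAlgebra (ZMod n) (Multiplicative (ZMod n × ZMod n)),
        z = ⟨1,
          ![(1 - MonoidAlgebra.of (ZMod n) (Multiplicative (ZMod n × ZMod n))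
              (Multiplicative.ofAdd ((0 : ZMod n), (1 : ZMod n)))) * p,
            -((1 - MonoidAlgebra.of (ZMod n) (Multiplicative (ZMod n × ZMod n))
              (Multiplicative.ofAdd ((1 : ZMod n), (0 : ZMod n)))) * p)]⟩ := by
  rw [PhiStar.commutator_eq_koszulSubgroup, MagnusGroup.mem_koszulSubgroup]
  simp only [PhiStar.translation_smul_koszulSyzygy_gen]
  rfl
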